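/- Let $\alpha > 0$, $\beta > \alpha$, and define $f(t) = (-t)^{-\beta}$ for $t < 0$, $f(t) = 0$ for $t \ge 0$. Then for every $p < 0$, $(\mathrm{I}^{\alpha}f)(p) = \frac{\Gamma(\beta - \alpha)}{\Gamma(\beta)} (-p)^{\alpha - \beta}$. -/

import Mathlib

open MeasureTheory

/-- Liouville fractional integral of an `ℝ≥0∞`-valued function. -/
noncomputable def liouvilleIE (α : ℝ) (f : ℝ → ENNReal) (x : ℝ) : ENNReal :=
  ENNReal.ofReal (1 / Real.Gamma α) *
    ∫⁻ t in Set.Iio x, f t * ENNReal.ofReal ((x - t) ^ (α - 1))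

/-- Liouville fractional integral `(I^α f)(x) = Γ(α)⁻¹ ∫_{-∞}^x f(t) (x-t)^{α-1} dt`,
valued in `[0,∞]`. -/
noncomputable def liouvilleI (α : ℝ) (f : ℝ → ℝ) (x : ℝ) : ENNReal :=
  liouvilleIE α (fun t => ENNReal.ofReal (f t)) x

/-!
Substituting `t = p / u` maps `(0, 1)` monotonically onto `(-∞, p)` with Jacobian `-p / u²`, and
turns the Jacobian times `(-t)^(-β) (p - t)^(α - 1)` into
`(-p)^(α - β) u^(β - α - 1) (1 - u)^(α - 1)`. The integral is therefore
`(-p)^(α - β) B(β - α, α) = (-p)^(α - β) Γ(β - α) Γ(α) / Γ(β)`,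
and the Beta integral converges exactly because `β - α > 0`.
-/

open Set ProbabilityTheory

lemma lintegral_Ioo_rpow_mul_one_sub_rpow {a b : ℝ} (ha : 0 < a) (hb : 0 < b) :
    ∫⁻ x in Ioo 0 1, ENNReal.ofReal (x ^ (a - 1) * (1 - x) ^ (b - 1)) =
      ENNReal.ofReal (beta a b) := by
  have hB := beta_pos ha hb
  have hpdf := lintegral_betaPDF_eq_one ha hb
  rw [lintegral_betaPDF] at hpdf
  calc ∫⁻ x in Ioo 0 1, ENNReal.ofReal (x ^ (a - 1) * (1 - x) ^ (b - 1))
      = ∫⁻ x in Ioo 0 1, ENNReal.ofReal (beta a b) *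
          ENNReal.ofReal (1 / beta a b * x ^ (a - 1) * (1 - x) ^ (b - 1)) := by
        refine lintegral_congr fun x => ?_
        rw [← ENNReal.ofReal_mul hB.le]
        field_simp
    _ = ENNReal.ofReal (beta a b) := by
        rw [lintegral_const_mul' _ _ ENNReal.ofReal_ne_top, hpdf, mul_one]

lemma image_const_div_Ioo_zero_one {p : ℝ} (hp : p < 0) :
    (fun u => p / u) '' Ioo 0 1 = Iio p := by
  ext t
  constructor
  · rintro ⟨u, ⟨hu0, hu1⟩, rfl⟩
    exact (div_lt_iff₀ hu0).2 (by nlinarith)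
  · intro ht
    have ht0 : t < 0 := ht.trans hp
    exact ⟨p / t, ⟨div_pos_of_neg_of_neg hp ht0, (div_lt_one_of_neg ht0).2 ht⟩,
      div_div_cancel₀ hp.ne⟩

lemma lintegral_Iio_eq_lintegral_Ioo_const_div {p : ℝ} (hp : p < 0) (g : ℝ → ENNReal) :
    ∫⁻ t in Iio p, g t = ∫⁻ u in Ioo 0 1, ENNReal.ofReal (-p / u ^ 2) * g (p / u) := by
  rw [← image_const_div_Ioo_zero_one hp]
  refine lintegral_image_eq_lintegral_deriv_mul_of_monotoneOn measurableSet_Ioo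
    (fun u hu => ?_) (fun u hu v hv huv => ?_) g
  · have hderiv := (hasDerivAt_inv hu.1.ne').const_mul p
    simp only [← div_eq_mul_inv] at hderiv
    exact (hderiv.congr_deriv (by ring)).hasDerivWithinAt
  · rw [div_le_div_iff₀ hu.1 hv.1]
    nlinarith

lemma neg_div_sq_mul_rpow_mul_rpow_sub_div {p u : ℝ} (hp : p < 0) (hu0 : 0 < u) (hu1 : u < 1)
    (α β : ℝ) :
    -p / u ^ 2 * ((-(p / u)) ^ (-β) * (p - p / u) ^ (α - 1)) =
      (-p) ^ (α - β) * (u ^ (β - α - 1) * (1 - u) ^ (α - 1)) := by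
  have hc : 0 < -p := neg_pos.2 hp
  rw [show -(p / u) = -p / u by ring, show p - p / u = -p * (1 - u) / u by field_simp; ring,
    Real.div_rpow hc.le hu0.le, Real.div_rpow (by nlinarith) hu0.le,
    Real.mul_rpow hc.le (by linarith), Real.rpow_neg hu0.le,
    show α - β = 1 + -β + (α - 1) by ring, show β - α - 1 = β - 2 - (α - 1) by ring,
    Real.rpow_add hc, Real.rpow_add hc, Real.rpow_one, Real.rpow_sub hu0 (β - 2),
    Real.rpow_sub hu0 β, Real.rpow_two]
  field_simp

theorem stmt12 (α β : ℝ) (hα : 0 < α) (hβ : α < β) (p : ℝ) (hp : p < 0) :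
    liouvilleI α (fun t => if t < 0 then (-t) ^ (-β) else 0) p =
      ENNReal.ofReal (Real.Gamma (β - α) / Real.Gamma β * (-p) ^ (α - β)) := by
  have hc : 0 < -p := neg_pos.2 hp
  have hintegrand : ∀ u ∈ Ioo (0 : ℝ) 1,
      ENNReal.ofReal (-p / u ^ 2) * (ENNReal.ofReal (if p / u < 0 then (-(p / u)) ^ (-β) else 0) *
        ENNReal.ofReal ((p - p / u) ^ (α - 1))) =
      ENNReal.ofReal ((-p) ^ (α - β)) *
        ENNReal.ofReal (u ^ (β - α - 1) * (1 - u) ^ (α - 1)) := by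
    rintro u ⟨hu0, hu1⟩
    have hpu : 0 < -(p / u) := neg_pos.2 (div_neg_of_neg_of_pos hp hu0)
    rw [if_pos (neg_pos.1 hpu), ← ENNReal.ofReal_mul (by positivity),
      ← ENNReal.ofReal_mul (div_nonneg hc.le (sq_nonneg u)),
      ← ENNReal.ofReal_mul (by positivity),
      neg_div_sq_mul_rpow_mul_rpow_sub_div hp hu0 hu1]
  rw [liouvilleI, liouvilleIE, lintegral_Iio_eq_lintegral_Ioo_const_div hp,
    setLIntegral_congr_fun measurableSet_Ioo hintegrand,
    lintegral_const_mul' _ _ ENNReal.ofReal_ne_top,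
    lintegral_Ioo_rpow_mul_one_sub_rpow (sub_pos.2 hβ) hα, ← ENNReal.ofReal_mul (by positivity),
    ← ENNReal.ofReal_mul (by positivity), beta, sub_add_cancel]
  have hΓ := Real.Gamma_pos_of_pos hα
  congr 1
  field_simp
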